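/- Key diagonal dominance inequality for the Canny-Emiris construction: let f = (f_1,…,f_k) be tropical Laurent polynomials in n variables having no common tropical root in ℝ^n, let h_i be the concave hull of the coefficient map of f_i, h = h_1 □ ⋯ □ h_k, and for 1 ≤ j ≤ k let ĥ_j = h_1 □ ⋯ □ h_{j−1} □ h_{j+1} □ ⋯ □ h_k. Let E = (Q+δ) ∩ ℤ^n be a nonempty Canny-Emiris set associated to f (δ generic). Let p ∈ E with row content (j, a_j). Then for all p' ∈ E and a'_j ∈ ℤ^n such that p' = p − a_j + a'_j, one has h(p' − δ) ≥ h_j(a'_j) + ĥ_j(p − δ − a_j), with equality if and only if p' = p (and then a'_j = a_j). -/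

import Mathlib

open scoped Pointwise

namespace TropicalNSS

/-- The tropical (max-plus) semiring `ℝ ∪ {-∞}`, with `⊕ = max` (the lattice `⊔`/`max`)
and `⊙ = +` (the `WithBot` addition, for which `⊥` is absorbing). -/
abbrev Trop : Type := WithBot ℝ

variable {n k p q : ℕ}

/-- Coercion of an integer exponent vector to `ℝ^n`. -/
def zR (α : Fin n → ℤ) : Fin n → ℝ := fun i => (α i : ℝ)

/-- The usual pairing `⟨x, y⟩` on `ℝ^n`. -/
def dotR (x y : Fin n → ℝ) : ℝ := ∑ i, x i * y i

/-- The usual pairing on `ℝ^n × ℝ`. -/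
def dotP (x y : (Fin n → ℝ) × ℝ) : ℝ := dotR x.1 y.1 + x.2 * y.2

/-- The support of a tropical Laurent polynomial. -/
def tsupp (f : (Fin n → ℤ) → Trop) : Set (Fin n → ℤ) := {α | f α ≠ ⊥}

/-- The tropical value `f_α ⊙ x^{⊙α} = f_α + ⟨x, α⟩` of the monomial of exponent `α`. -/
noncomputable def mono (f : (Fin n → ℤ) → Trop) (x : Fin n → ℝ) (α : Fin n → ℤ) : Trop :=
  f α + ((dotR x (zR α) : ℝ) : Trop)

/-- `x` is a tropical root of `f`: the maximum `max_α (f_α + ⟨x,α⟩)` is attained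
for at least two distinct exponents. -/
def IsTropRoot (f : (Fin n → ℤ) → Trop) (x : Fin n → ℝ) : Prop :=
  ∃ α β : Fin n → ℤ, α ≠ β ∧ mono f x α = mono f x β ∧
    ∀ γ : Fin n → ℤ, mono f x γ ≤ mono f x α

/-- The row of the Macaulay matrix indexed by `(f, α)`, restricted to the columns in `E`,
has its maximum (against the vector `y`) attained at least twice. -/
def MacRow (f : (Fin n → ℤ) → Trop) (α : Fin n → ℤ) (E : Set (Fin n → ℤ))
    (y : (Fin n → ℤ) → Trop) : Prop :=
  ∃ β ∈ E, ∃ β' ∈ E, β ≠ β' ∧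
    f (β - α) + y β = f (β' - α) + y β' ∧
    ∀ γ ∈ E, f (γ - α) + y γ ≤ f (β - α) + y β

/-- `M^𝒜_E ⊙ y ∇ 𝟘` : every row `(i, α)` of the Macaulay matrix of `f` with
`α + 𝒜 i ⊆ E` has its maximum attained at least twice on the columns in `E`. -/
def MacaulayNull (f : Fin k → (Fin n → ℤ) → Trop) (A : Fin k → Set (Fin n → ℤ))
    (E : Set (Fin n → ℤ)) (y : (Fin n → ℤ) → Trop) : Prop :=
  ∀ (i : Fin k) (α : Fin n → ℤ), (∀ γ ∈ A i, α + γ ∈ E) → MacRow (f i) α E y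

/-- Dimension of a subset of a real vector space: the dimension of its affine hull. -/
noncomputable def sdim {X : Type*} [AddCommGroup X] [Module ℝ X] (s : Set X) : ℕ :=
  Module.finrank ℝ (affineSpan ℝ s).direction

/-- `F` is a face of the convex set `P`: a convex extreme subset. -/
def IsFaceOf {X : Type*} [AddCommGroup X] [Module ℝ X] (F P : Set X) : Prop :=
  Convex ℝ F ∧ IsExtreme ℝ P F

/-- `F` is a facet of `P`: a face of dimension `dim P - 1`. -/
def IsFacetOf {X : Type*} [AddCommGroup X] [Module ℝ X] (F P : Set X) : Prop :=
  IsFaceOf F P ∧ sdim F + 1 = sdim P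

/-- A convex subset of `ℝ^n × ℝ` is vertical when `(0, 1)` belongs to the direction
of its affine hull. -/
def IsVert (F : Set ((Fin n → ℝ) × ℝ)) : Prop :=
  ((0 : Fin n → ℝ), (1 : ℝ)) ∈ (affineSpan ℝ F).direction

/-- The normal cone of `P ⊆ ℝ^n` at a point `x`. -/
def normalCone (P : Set (Fin n → ℝ)) (x : Fin n → ℝ) : Set (Fin n → ℝ) :=
  {y | ∀ z ∈ P, dotR y (z - x) ≤ 0}

/-- The normal cone of `P ⊆ ℝ^n × ℝ` at a point `z`. -/
def normalConeP (P : Set ((Fin n → ℝ) × ℝ)) (z : (Fin n → ℝ) × ℝ) :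
    Set ((Fin n → ℝ) × ℝ) :=
  {y | ∀ w ∈ P, dotP y (w - z) ≤ 0}

/-- A (closed convex) polyhedron in `ℝ^n`: a finite intersection of half-spaces. -/
def IsPolyhedron (P : Set (Fin n → ℝ)) : Prop :=
  ∃ S : Set ((Fin n → ℝ) × ℝ), S.Finite ∧ P = {x | ∀ c ∈ S, dotR c.1 x ≤ c.2}

/-- A (closed convex) polyhedron in `ℝ^n × ℝ`. -/
def IsPolyhedronP (P : Set ((Fin n → ℝ) × ℝ)) : Prop :=
  ∃ S : Set (((Fin n → ℝ) × ℝ) × ℝ), S.Finite ∧ P = {x | ∀ c ∈ S, dotP c.1 x ≤ c.2}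

/-- The hypograph of the coefficient map of `f`, as a subset of `ℝ^n × ℝ`. -/
def hypoPts (f : (Fin n → ℤ) → Trop) : Set ((Fin n → ℝ) × ℝ) :=
  {z | ∃ α : Fin n → ℤ, z.1 = zR α ∧ (z.2 : Trop) ≤ f α}

/-- The hypograph of the concave hull `h` of the coefficient map of `f`
(the "extended Newton polytope" of `f`). -/
def hypoF (f : (Fin n → ℤ) → Trop) : Set ((Fin n → ℝ) × ℝ) :=
  convexHull ℝ (hypoPts f)

/-- The Newton polytope `Q = Q_1 + ⋯ + Q_k` of a collection of tropical polynomials. -/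
def NPoly (f : Fin k → (Fin n → ℤ) → Trop) : Set (Fin n → ℝ) :=
  ∑ i, convexHull ℝ (zR '' tsupp (f i))

/-- `hypo(h) = hypo(h_1) + ⋯ + hypo(h_k)`, the hypograph of the sup-convolution
`h = h_1 □ ⋯ □ h_k` of the concave hulls of the coefficient maps. -/
def HypSum (f : Fin k → (Fin n → ℤ) → Trop) : Set ((Fin n → ℝ) × ℝ) :=
  ∑ i, hypoF (f i)

/-- `δ` is a generic vector in `V + ℤ^n` (where `V` directs the affine hull of `Q`):
for every integer point `p` of `Q + δ`, the point `(p - δ, h(p - δ))` lies in the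
relative interior of a unique non-vertical facet of `H = hypo(h)`. -/
def GenericDelta (Q : Set (Fin n → ℝ)) (H : Set ((Fin n → ℝ) × ℝ)) (δ : Fin n → ℝ) : Prop :=
  (∃ v ∈ (affineSpan ℝ Q).direction, ∃ z : Fin n → ℤ, δ = v + zR z) ∧
  ∀ p : Fin n → ℤ, zR p - δ ∈ Q →
    ∃ t : ℝ, IsGreatest {s : ℝ | (zR p - δ, s) ∈ H} t ∧
      ∃! F : Set ((Fin n → ℝ) × ℝ),
        IsFacetOf F H ∧ ¬ IsVert F ∧ (zR p - δ, t) ∈ intrinsicInterior ℝ F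

/-- `E` is a Canny-Emiris set: `E = (Q + δ) ∩ ℤ^n` for some generic `δ`. -/
def IsCannyEmiris (Q : Set (Fin n → ℝ)) (H : Set ((Fin n → ℝ) × ℝ))
    (E : Set (Fin n → ℤ)) : Prop :=
  ∃ δ : Fin n → ℝ, GenericDelta Q H δ ∧ E = {p | zR p - δ ∈ Q}

/-- The value `h(x)` of the concave function with hypograph `H`, as an extended real. -/
noncomputable def hvalS (H : Set ((Fin n → ℝ) × ℝ)) (x : Fin n → ℝ) : EReal :=
  ⨆ t ∈ {s : ℝ | (x, s) ∈ H}, (t : EReal)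

/-- Embedding of `ℝ ∪ {-∞}` into the extended reals. -/
noncomputable def tE : Trop → EReal := WithBot.recBotCoe ⊥ (fun r : ℝ => (r : EReal))

/-- `𝒞(x, h) = argmax_q (⟨q, x⟩ + h(q))`, for the concave function `h` with hypograph `H`. -/
def CsetS (x : Fin n → ℝ) (H : Set ((Fin n → ℝ) × ℝ)) : Set (Fin n → ℝ) :=
  {w | ∀ w', hvalS H w' + ((dotR w' x : ℝ) : EReal) ≤ hvalS H w + ((dotR w x : ℝ) : EReal)}

/-- `ℱ(x, h) = {(q, h(q)) : q ∈ 𝒞(x, h)}`, for the concave function `h` with hypograph `H`. -/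
def FcalS (x : Fin n → ℝ) (H : Set ((Fin n → ℝ) × ℝ)) : Set ((Fin n → ℝ) × ℝ) :=
  {z | ((z.2 : ℝ) : EReal) = hvalS H z.1 ∧ z.1 ∈ CsetS x H}

/-- The three relation symbols `≥`, `=`, `>`. -/
inductive TRel3 : Type | ge : TRel3 | eq : TRel3 | gt : TRel3

/-- Interpretation of a relation symbol on the tropical semiring. -/
def TRel3.holds : TRel3 → Trop → Trop → Prop
  | .ge, a, b => b ≤ a
  | .eq, a, b => a = b
  | .gt, a, b => b < a

/-- The two relation symbols `≥`, `=`. -/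
inductive TRel2 : Type | ge : TRel2 | eq : TRel2

/-- Interpretation of a relation symbol on the tropical semiring. -/
def TRel2.holds : TRel2 → Trop → Trop → Prop
  | .ge, a, b => b ≤ a
  | .eq, a, b => a = b

/-- `v` is the value `f(x) = max_α (f_α + ⟨x, α⟩)` (the maximum being attained). -/
def EvalIs (f : (Fin n → ℤ) → Trop) (x : Fin n → ℝ) (v : Trop) : Prop :=
  (∀ α, mono f x α ≤ v) ∧ ∃ α, mono f x α = v

/-- `x` satisfies the relation `f⁺(x) ⊳ f⁻(x)`. -/
def SolvesRel3 (r : TRel3) (fp fm : (Fin n → ℤ) → Trop) (x : Fin n → ℝ) : Prop :=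
  ∃ vp vm : Trop, EvalIs fp x vp ∧ EvalIs fm x vm ∧ r.holds vp vm

/-- `x` satisfies the relation `f⁺(x) ⊳ f⁻(x)` (two-sided, no strict inequality). -/
def SolvesRel2 (r : TRel2) (fp fm : (Fin n → ℤ) → Trop) (x : Fin n → ℝ) : Prop :=
  ∃ vp vm : Trop, EvalIs fp x vp ∧ EvalIs fm x vm ∧ r.holds vp vm

/-- `v` is the value of the row `(f, α)` of the Macaulay matrix against `y`, over columns `E`. -/
def RowEvalIs (f : (Fin n → ℤ) → Trop) (α : Fin n → ℤ) (E : Set (Fin n → ℤ))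
    (y : (Fin n → ℤ) → Trop) (v : Trop) : Prop :=
  (∀ β ∈ E, f (β - α) + y β ≤ v) ∧ ∃ β ∈ E, f (β - α) + y β = v

/-- The linearized system `M⁺_E ⊙ y ⊳ M⁻_E ⊙ y`: for every row `(i, α)` with
`α + 𝒜 i ⊆ E`, the relation `⊳ᵢ` holds between the two row values. -/
def MacaulayRel3 (r : Fin k → TRel3) (fp fm : Fin k → (Fin n → ℤ) → Trop)
    (A : Fin k → Set (Fin n → ℤ)) (E : Set (Fin n → ℤ)) (y : (Fin n → ℤ) → Trop) : Prop :=
  ∀ (i : Fin k) (α : Fin n → ℤ), (∀ γ ∈ A i, α + γ ∈ E) →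
    ∃ vp vm : Trop, RowEvalIs (fp i) α E y vp ∧ RowEvalIs (fm i) α E y vm ∧
      (r i).holds vp vm

/-- The integer `r_i` associated to a relation and the supports `𝒜_i^±`. -/
noncomputable def rOf3 (r : TRel3) (Sp Sm : Set (Fin n → ℤ)) : ℕ :=
  match r with
  | .eq => max (sdim (zR '' Sm)) (sdim (zR '' Sp)) + 1
  | _ => sdim (zR '' Sm) + 1

/-- The integer `r_i` associated to a relation and the supports `𝒜_i^±`. -/
noncomputable def rOf2 (r : TRel2) (Sp Sm : Set (Fin n → ℤ)) : ℕ :=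
  match r with
  | .eq => max (sdim (zR '' Sm)) (sdim (zR '' Sp)) + 1
  | .ge => sdim (zR '' Sm) + 1

/-- The dilated polytope `Q̃ = r_1 Q_1 + ⋯ + r_k Q_k` of a two-sided system. -/
noncomputable def Qtilde3 (r : Fin k → TRel3) (fp fm : Fin k → (Fin n → ℤ) → Trop) :
    Set (Fin n → ℝ) :=
  ∑ i, (rOf3 (r i) (tsupp (fp i)) (tsupp (fm i)) : ℝ) •
      convexHull ℝ (zR '' (tsupp (fp i) ∪ tsupp (fm i)))

/-- The hypograph of `h̃ = h_1^{□r_1} □ ⋯ □ h_k^{□r_k}` for a two-sided system,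
where `h_i` is the concave hull of the coefficient map of `f_i = f_i⁺ ⊕ f_i⁻`. -/
noncomputable def Htilde3 (r : Fin k → TRel3) (fp fm : Fin k → (Fin n → ℤ) → Trop) :
    Set ((Fin n → ℝ) × ℝ) :=
  ∑ i, (rOf3 (r i) (tsupp (fp i)) (tsupp (fm i)) : ℝ) • hypoF (fun α => fp i α ⊔ fm i α)

/-- Same as `Qtilde3` without strict inequalities. -/
noncomputable def Qtilde2 (r : Fin k → TRel2) (fp fm : Fin k → (Fin n → ℤ) → Trop) :
    Set (Fin n → ℝ) :=
  ∑ i, (rOf2 (r i) (tsupp (fp i)) (tsupp (fm i)) : ℝ) •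
      convexHull ℝ (zR '' (tsupp (fp i) ∪ tsupp (fm i)))

/-- Same as `Htilde3` without strict inequalities. -/
noncomputable def Htilde2 (r : Fin k → TRel2) (fp fm : Fin k → (Fin n → ℤ) → Trop) :
    Set ((Fin n → ℝ) × ℝ) :=
  ∑ i, (rOf2 (r i) (tsupp (fp i)) (tsupp (fm i)) : ℝ) • hypoF (fun α => fp i α ⊔ fm i α)

/-- Hypograph of a function `ℝ^n → ℝ ∪ {±∞}`. -/
def hypoE (g : (Fin n → ℝ) → EReal) : Set ((Fin n → ℝ) × ℝ) :=
  {z | (z.2 : EReal) ≤ g z.1}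

/-- Sup-convolution `h_1 □ ⋯ □ h_ℓ` of a finite family:
`x ↦ sup {h_1(w_1) + ⋯ + h_ℓ(w_ℓ) : w_1 + ⋯ + w_ℓ = x}`. -/
noncomputable def supConvFam {ℓ : ℕ} (h : Fin ℓ → (Fin n → ℝ) → EReal) :
    (Fin n → ℝ) → EReal :=
  fun x => ⨆ (w : Fin ℓ → Fin n → ℝ) (_ : ∑ i, w i = x), ∑ i, h i (w i)

/-- `ℱ(x, g) = {(q, g(q)) : q ∈ argmax(⟨q, x⟩ + g(q))}` for `g : ℝ^n → ℝ ∪ {±∞}`. -/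
def FcalE (x : Fin n → ℝ) (g : (Fin n → ℝ) → EReal) : Set ((Fin n → ℝ) × ℝ) :=
  {z | (z.2 : EReal) = g z.1 ∧
    ∀ w, g w + ((dotR w x : ℝ) : EReal) ≤ g z.1 + ((dotR z.1 x : ℝ) : EReal)}

/-- Tropical matrix-vector product: `(A ⊙ y)_i = max_j (a_{ij} + y_j)`. -/
noncomputable def tApp (A : Fin p → Fin q → Trop) (y : Fin q → Trop) (i : Fin p) : Trop :=
  Finset.univ.sup fun j => A i j + y j

/-- `A ⊙ y ∇ 𝟘`: in every row the maximum is attained at least twice. -/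
def TropNullVec (A : Fin p → Fin q → Trop) (y : Fin q → Trop) : Prop :=
  ∀ i, ∃ j j' : Fin q, j ≠ j' ∧ A i j + y j = A i j' + y j' ∧
    ∀ l, A i l + y l ≤ A i j + y j

/-- The lattice points `NΔ ∩ ℕ^n` of the `N`-dilated unit simplex. -/
def simplexPts (n N : ℕ) : Set (Fin n → ℤ) :=
  {α | (∀ j, 0 ≤ α j) ∧ (∑ j, α j) ≤ (N : ℤ)}


/-! ### Auxiliary infrastructure for the proof -/

section CEAux

open Set

variable {n : ℕ}

/-- The linear functional `ℓ_x(u, s) = s + ⟨u, x⟩` on `ℝ^n × ℝ`. -/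
def ell (x : Fin n → ℝ) (z : (Fin n → ℝ) × ℝ) : ℝ := z.2 + dotR z.1 x

lemma zR_add (α β : Fin n → ℤ) : zR (α + β) = zR α + zR β := by
  funext i; simp [zR]

lemma zR_sub (α β : Fin n → ℤ) : zR (α - β) = zR α - zR β := by
  funext i; simp [zR]

lemma zR_inj {α β : Fin n → ℤ} (h : zR α = zR β) : α = β := by
  funext i
  have := congrFun h i
  simp only [zR] at this
  exact_mod_cast this

lemma dotR_add_left (x y z : Fin n → ℝ) : dotR (x + y) z = dotR x z + dotR y z := by
  simp [dotR, add_mul, Finset.sum_add_distrib]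

lemma dotR_sub_left (x y z : Fin n → ℝ) : dotR (x - y) z = dotR x z - dotR y z := by
  simp [dotR, sub_mul, Finset.sum_sub_distrib]

lemma dotR_smul_left (c : ℝ) (x z : Fin n → ℝ) : dotR (c • x) z = c * dotR x z := by
  simp [dotR, Finset.mul_sum, mul_assoc]

lemma dotR_zero_left (z : Fin n → ℝ) : dotR 0 z = 0 := by simp [dotR]

lemma dotR_add_right (x y z : Fin n → ℝ) : dotR x (y + z) = dotR x y + dotR x z := by
  simp [dotR, mul_add, Finset.sum_add_distrib]

lemma dotR_sub_right (x y z : Fin n → ℝ) : dotR x (y - z) = dotR x y - dotR x z := by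
  simp [dotR, mul_sub, Finset.sum_sub_distrib]

lemma dotR_smul_right (c : ℝ) (x z : Fin n → ℝ) : dotR x (c • z) = c * dotR x z := by
  simp only [dotR, Finset.mul_sum, Pi.smul_apply, smul_eq_mul]
  exact Finset.sum_congr rfl fun i _ => by ring

lemma ell_add (x : Fin n → ℝ) (z w : (Fin n → ℝ) × ℝ) :
    ell x (z + w) = ell x z + ell x w := by
  simp [ell, dotR_add_left]; ring

lemma ell_sub (x : Fin n → ℝ) (z w : (Fin n → ℝ) × ℝ) :
    ell x (z - w) = ell x z - ell x w := by
  simp [ell, dotR_sub_left]; ring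

lemma ell_smul (x : Fin n → ℝ) (c : ℝ) (z : (Fin n → ℝ) × ℝ) :
    ell x (c • z) = c * ell x z := by
  simp [ell, dotR_smul_left]; ring

lemma ell_sum {ι : Type*} (x : Fin n → ℝ) (s : Finset ι) (g : ι → (Fin n → ℝ) × ℝ) :
    ell x (∑ i ∈ s, g i) = ∑ i ∈ s, ell x (g i) := by
  classical
  induction s using Finset.induction_on with
  | empty => simp [ell, dotR_zero_left]
  | insert _ _ h ih => rw [Finset.sum_insert h, ell_add, ih, Finset.sum_insert h]

lemma ell_interp (x x' : Fin n → ℝ) (θ : ℝ) (z : (Fin n → ℝ) × ℝ) :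
    ell (x + θ • (x' - x)) z = ell x z + θ * (ell x' z - ell x z) := by
  simp [ell, dotR_add_right, dotR_smul_right, dotR_sub_right]; ring

/-- The downward vertical cone `{0} × (-∞, 0]`. -/
def Dn (n : ℕ) : Set ((Fin n → ℝ) × ℝ) := {z | z.1 = 0 ∧ z.2 ≤ 0}

lemma zero_mem_Dn : (0 : (Fin n → ℝ) × ℝ) ∈ Dn n := ⟨rfl, le_refl _⟩

lemma convex_Dn : Convex ℝ (Dn n) := by
  intro z hz w hw a b ha hb hab
  constructor
  · show a • z.1 + b • w.1 = 0
    rw [hz.1, hw.1]; simp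
  · show a * z.2 + b * w.2 ≤ 0
    have := mul_nonpos_of_nonneg_of_nonpos ha hz.2
    have := mul_nonpos_of_nonneg_of_nonpos hb hw.2
    linarith

lemma Dn_add_Dn : Dn n + Dn n = Dn n := by
  apply Set.Subset.antisymm
  · rintro z ⟨d₁, h₁, d₂, h₂, rfl⟩
    exact ⟨by rw [show (d₁ + d₂).1 = d₁.1 + d₂.1 from rfl, h₁.1, h₂.1]; simp,
      by show d₁.2 + d₂.2 ≤ 0; linarith [h₁.2, h₂.2]⟩
  · intro z hz
    exact ⟨z, hz, 0, zero_mem_Dn, by simp⟩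

/-- An empty factor annihilates a pointwise finite sum of sets. -/
lemma sum_sets_empty {ι M : Type*} [AddCommMonoid M] [DecidableEq ι] {s : Finset ι}
    {A : ι → Set M} {i₀ : ι} (h : i₀ ∈ s) (he : A i₀ = ∅) : ∑ i ∈ s, A i = ∅ := by
  rw [Set.eq_empty_iff_forall_notMem]
  intro z hz
  obtain ⟨g, hg, -⟩ := (Set.mem_finset_sum s A z).1 hz
  have := hg h
  rw [he] at this
  exact this

lemma convex_sum_sets {ι M : Type*} [AddCommGroup M] [Module ℝ M] {s : Finset ι}
    {A : ι → Set M} (h : ∀ i ∈ s, Convex ℝ (A i)) : Convex ℝ (∑ i ∈ s, A i) := by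
  classical
  induction s using Finset.induction_on with
  | empty => exact convex_singleton (𝕜 := ℝ) (0 : M)
  | insert _ _ hns ih =>
    rw [Finset.sum_insert hns]
    exact Convex.add (h _ (Finset.mem_insert_self _ _))
      (ih fun i hi => h i (Finset.mem_insert_of_mem hi))

lemma isCompact_sum_sets {ι M : Type*} [AddCommGroup M] [Module ℝ M] [TopologicalSpace M]
    [IsTopologicalAddGroup M] {s : Finset ι}
    {A : ι → Set M} (h : ∀ i ∈ s, IsCompact (A i)) : IsCompact (∑ i ∈ s, A i) := by
  classical
  induction s using Finset.induction_on with
  | empty =>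
    rw [Finset.sum_empty]
    have : (0 : Set M) = {0} := rfl
    rw [this]; exact isCompact_singleton
  | insert _ _ hns ih =>
    rw [Finset.sum_insert hns]
    exact IsCompact.add (h _ (Finset.mem_insert_self _ _))
      (ih fun i hi => h i (Finset.mem_insert_of_mem hi))

end CEAux

section CEInterp

lemma interp_le {P P' Q Q' th gg0 gg1 : ℝ} (hE0 : Q - P = gg0) (hE1 : Q' - P' = gg1)
    (hkey : th * (gg0 - gg1) ≤ gg0) : P + th * (P' - P) ≤ Q + th * (Q' - Q) := by
  have h4 : th * (Q - P) = th * gg0 := by rw [hE0]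
  have h5 : th * (Q' - P') = th * gg1 := by rw [hE1]
  nlinarith [h4, h5, hkey]

lemma interp_eq {P P' Q Q' th gg0 gg1 : ℝ} (hE0 : Q - P = gg0) (hE1 : Q' - P' = gg1)
    (hkey : th * (gg0 - gg1) = gg0) : P + th * (P' - P) = Q + th * (Q' - Q) := by
  have h4 : th * (Q - P) = th * gg0 := by rw [hE0]
  have h5 : th * (Q' - P') = th * gg1 := by rw [hE1]
  nlinarith [h4, h5, hkey]

lemma interp_le2 {P P' Q Q' th : ℝ} (h1 : P ≤ Q) (h2 : P' ≤ Q') (h0 : 0 ≤ th) (hth : th ≤ 1) :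
    P + th * (P' - P) ≤ Q + th * (Q' - Q) := by
  nlinarith [mul_le_mul_of_nonneg_left h1 (by linarith : (0:ℝ) ≤ 1 - th),
    mul_le_mul_of_nonneg_left h2 h0]

end CEInterp
section CEAux2

open Set

variable {n : ℕ}

/-- The real coefficient of a tropical polynomial at a support point. -/
noncomputable def cf (f : (Fin n → ℤ) → Trop) (α : Fin n → ℤ) : ℝ := (f α).unbotD 0

lemma cf_spec {f : (Fin n → ℤ) → Trop} {α : Fin n → ℤ} (h : α ∈ tsupp f) :
    ((cf f α : ℝ) : Trop) = f α := by
  have h' : f α ≠ ⊥ := h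
  cases hfa : f α with
  | none => exact absurd hfa h'
  | some r => simp only [cf, hfa]; rfl

/-- The (finite) set of graph points `(α, f_α)` of a tropical polynomial. -/
noncomputable def Gpts (f : (Fin n → ℤ) → Trop) : Set ((Fin n → ℝ) × ℝ) :=
  (fun α => ((zR α : Fin n → ℝ), cf f α)) '' tsupp f

lemma Gpts_finite {f : (Fin n → ℤ) → Trop} (hf : (tsupp f).Finite) : (Gpts f).Finite :=
  hf.image _

lemma hypoPts_eq (f : (Fin n → ℤ) → Trop) : hypoPts f = Gpts f + Dn n := by
  ext z
  constructor
  · rintro ⟨α, h1, h2⟩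
    have hα : α ∈ tsupp f := by
      intro hbot
      rw [hbot, le_bot_iff] at h2
      exact WithBot.coe_ne_bot h2
    have h2' : z.2 ≤ cf f α := by
      rw [← cf_spec hα] at h2
      exact_mod_cast h2
    refine ⟨(zR α, cf f α), ⟨α, hα, rfl⟩, (0, z.2 - cf f α),
      ⟨rfl, by show z.2 - cf f α ≤ 0; linarith⟩, ?_⟩
    show (zR α, cf f α) + (0, z.2 - cf f α) = z
    rw [Prod.mk_add_mk]
    refine Prod.ext_iff.2 ⟨by simp [h1], by show cf f α + (z.2 - cf f α) = z.2; ring⟩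
  · rintro ⟨g, ⟨α, hα, rfl⟩, d, hd, rfl⟩
    refine ⟨α, ?_, ?_⟩
    · show zR α + d.1 = zR α; rw [hd.1]; simp
    · show ((cf f α + d.2 : ℝ) : Trop) ≤ f α
      rw [← cf_spec hα]
      exact_mod_cast by linarith [hd.2]

lemma hypoF_eq (f : (Fin n → ℤ) → Trop) :
    hypoF f = convexHull ℝ (Gpts f) + Dn n := by
  rw [hypoF, hypoPts_eq, convexHull_add, convex_Dn.convexHull_eq]

lemma graph_mem_hypoF {f : (Fin n → ℤ) → Trop} {α : Fin n → ℤ} (h : α ∈ tsupp f) :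
    ((zR α : Fin n → ℝ), cf f α) ∈ hypoF f := by
  rw [hypoF_eq]
  exact ⟨(zR α, cf f α), subset_convexHull ℝ _ ⟨α, h, rfl⟩, 0, zero_mem_Dn, by simp⟩

lemma mem_KD {K : Set ((Fin n → ℝ) × ℝ)} {u : Fin n → ℝ} {s : ℝ} :
    (u, s) ∈ K + Dn n ↔ ∃ r, s ≤ r ∧ (u, r) ∈ K := by
  constructor
  · rintro ⟨g, hg, d, hd, hsum⟩
    have h1 : g.1 + d.1 = u := congrArg Prod.fst hsum
    have h2 : g.2 + d.2 = s := congrArg Prod.snd hsum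
    refine ⟨g.2, by linarith [hd.2], ?_⟩
    have : g.1 = u := by rw [← h1, hd.1]; simp
    rw [← this, Prod.mk.eta]
    exact hg
  · rintro ⟨r, hr, hK⟩
    refine ⟨(u, r), hK, (0, s - r), ⟨rfl, by show s - r ≤ 0; linarith⟩, ?_⟩
    show (u, r) + (0, s - r) = (u, s)
    rw [Prod.mk_add_mk]
    refine Prod.ext_iff.2 ⟨by simp, by show r + (s - r) = s; ring⟩

lemma KD_down {K : Set ((Fin n → ℝ) × ℝ)} {u : Fin n → ℝ} {s s' : ℝ}
    (h : (u, s) ∈ K + Dn n) (h' : s' ≤ s) : (u, s') ∈ K + Dn n := by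
  obtain ⟨r, hr, hK⟩ := mem_KD.1 h
  exact mem_KD.2 ⟨r, le_trans h' hr, hK⟩

lemma exists_greatest_KD {K : Set ((Fin n → ℝ) × ℝ)} (hK : IsCompact K) {u : Fin n → ℝ}
    {s : ℝ} (h : (u, s) ∈ K + Dn n) :
    ∃ m : ℝ, IsGreatest {r : ℝ | (u, r) ∈ K + Dn n} m := by
  set Ks : Set ℝ := {r | (u, r) ∈ K} with hKs
  have hcont : Continuous fun r : ℝ => ((u, r) : (Fin n → ℝ) × ℝ) :=
    continuous_const.prodMk continuous_id
  have hclosed : IsClosed Ks := hK.isClosed.preimage hcont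
  have hne : Ks.Nonempty := by
    obtain ⟨r, _, hrK⟩ := mem_KD.1 h
    exact ⟨r, hrK⟩
  have hbdd : BddAbove Ks := by
    have : Ks ⊆ Prod.snd '' K := fun r hr => ⟨(u, r), hr, rfl⟩
    exact BddAbove.mono this (hK.image continuous_snd).bddAbove
  have hmem : sSup Ks ∈ Ks := hclosed.csSup_mem hne hbdd
  refine ⟨sSup Ks, mem_KD.2 ⟨sSup Ks, le_refl _, hmem⟩, ?_⟩
  intro r hr
  obtain ⟨r', hrr', hr'K⟩ := mem_KD.1 hr
  exact le_trans hrr' (le_csSup hbdd hr'K)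

/-! ### `hvalS` lemmas -/

lemma le_hval {H : Set ((Fin n → ℝ) × ℝ)} {u : Fin n → ℝ} {s : ℝ} (h : (u, s) ∈ H) :
    (s : EReal) ≤ hvalS H u := by
  exact le_iSup₂ (f := fun (t : ℝ) (_ : t ∈ {r : ℝ | (u, r) ∈ H}) => (t : EReal)) s h

lemma hval_le {H : Set ((Fin n → ℝ) × ℝ)} {u : Fin n → ℝ} {B : ℝ}
    (h : ∀ r : ℝ, (u, r) ∈ H → r ≤ B) : hvalS H u ≤ (B : EReal) :=
  iSup₂_le fun r hr => EReal.coe_le_coe_iff.2 (h r hr)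

lemma hval_eq_of_isGreatest {H : Set ((Fin n → ℝ) × ℝ)} {u : Fin n → ℝ} {m : ℝ}
    (h : IsGreatest {r : ℝ | (u, r) ∈ H} m) : hvalS H u = (m : EReal) :=
  le_antisymm (hval_le fun r hr => h.2 hr) (le_hval h.1)

lemma exists_mem_of_hval_ne_bot {H : Set ((Fin n → ℝ) × ℝ)} {u : Fin n → ℝ}
    (h : hvalS H u ≠ ⊥) : ∃ r : ℝ, (u, r) ∈ H := by
  by_contra hc
  push_neg at hc
  apply h
  have he : {s : ℝ | (u, s) ∈ H} = ∅ := Set.eq_empty_iff_forall_notMem.2 fun r hr => hc r hr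
  show (⨆ t ∈ {s : ℝ | (u, s) ∈ H}, (t : EReal)) = ⊥
  rw [he]
  simp

lemma hval_add_coe_le {H : Set ((Fin n → ℝ) × ℝ)} {u : Fin n → ℝ} {c B : ℝ}
    (h : ∀ r : ℝ, (u, r) ∈ H → r + c ≤ B) : hvalS H u + (c : EReal) ≤ (B : EReal) := by
  by_cases hb : hvalS H u = ⊥
  · rw [hb, EReal.bot_add]; exact bot_le
  · have h1 : hvalS H u ≤ ((B - c : ℝ) : EReal) := hval_le fun r hr => by linarith [h r hr]
    calc hvalS H u + (c : EReal) ≤ ((B - c : ℝ) : EReal) + (c : EReal) :=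
          add_le_add_left h1 _
      _ = (B : EReal) := by rw [← EReal.coe_add]; norm_num

lemma coe_add_le_hval_add {H : Set ((Fin n → ℝ) × ℝ)} {u : Fin n → ℝ} {s : ℝ} (c : ℝ)
    (h : (u, s) ∈ H) : ((s + c : ℝ) : EReal) ≤ hvalS H u + (c : EReal) := by
  rw [EReal.coe_add]
  exact add_le_add_left (le_hval h) _

/-! ### Halfspace bounds -/

lemma ell_le_of_hull_KD {G : Set ((Fin n → ℝ) × ℝ)} {x : Fin n → ℝ} {B : ℝ}
    (hG : ∀ g ∈ G, ell x g ≤ B) {z : (Fin n → ℝ) × ℝ}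
    (hz : z ∈ convexHull ℝ G + Dn n) : ell x z ≤ B := by
  have hconv : Convex ℝ {w : (Fin n → ℝ) × ℝ | ell x w ≤ B} := by
    intro w hw w' hw' a b ha hb hab
    have : ell x (a • w + b • w') = a * ell x w + b * ell x w' := by
      rw [ell_add, ell_smul, ell_smul]
    rw [Set.mem_setOf_eq, this]
    calc a * ell x w + b * ell x w' ≤ a * B + b * B :=
          add_le_add (mul_le_mul_of_nonneg_left hw ha) (mul_le_mul_of_nonneg_left hw' hb)
      _ = B := by rw [← add_mul, hab, one_mul]
  obtain ⟨g, hg, d, hd, rfl⟩ := hz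
  have h1 : ell x g ≤ B := convexHull_min hG hconv hg
  have h2 : ell x d ≤ 0 := by
    show d.2 + dotR d.1 x ≤ 0
    rw [hd.1, dotR_zero_left]
    linarith [hd.2]
  rw [ell_add]; linarith

end CEAux2
section CEAux3

open Set

variable {n : ℕ}

/-- The maximum of `ℓ_x` over the graph points of `f`. -/
noncomputable def msup (f : (Fin n → ℤ) → Trop) (hf : (tsupp f).Finite)
    (hne : (tsupp f).Nonempty) (x : Fin n → ℝ) : ℝ :=
  hf.toFinset.sup' ((Set.Finite.toFinset_nonempty hf).2 hne)
    fun α => cf f α + dotR (zR α) x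

lemma le_msup {f : (Fin n → ℤ) → Trop} (hf : (tsupp f).Finite) (hne : (tsupp f).Nonempty)
    (x : Fin n → ℝ) {α : Fin n → ℤ} (hα : α ∈ tsupp f) :
    cf f α + dotR (zR α) x ≤ msup f hf hne x := by
  unfold msup
  exact Finset.le_sup' (fun α => cf f α + dotR (zR α) x) (hf.mem_toFinset.2 hα)

lemma exists_msup {f : (Fin n → ℤ) → Trop} (hf : (tsupp f).Finite)
    (hne : (tsupp f).Nonempty) (x : Fin n → ℝ) :
    ∃ α ∈ tsupp f, cf f α + dotR (zR α) x = msup f hf hne x := by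
  obtain ⟨α, hα, h⟩ := Finset.exists_mem_eq_sup'
    ((Set.Finite.toFinset_nonempty hf).2 hne) (fun α => cf f α + dotR (zR α) x)
  exact ⟨α, hf.mem_toFinset.1 hα, h.symm⟩

lemma ell_le_msup {f : (Fin n → ℤ) → Trop} (hf : (tsupp f).Finite)
    (hne : (tsupp f).Nonempty) (x : Fin n → ℝ) {z : (Fin n → ℝ) × ℝ} (hz : z ∈ hypoF f) :
    ell x z ≤ msup f hf hne x := by
  rw [hypoF_eq] at hz
  refine ell_le_of_hull_KD ?_ hz
  rintro g ⟨α, hα, rfl⟩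
  exact le_msup hf hne x hα

/-! ### Geometry: relative interior, level sets, dimension -/

/-- From a point of the intrinsic interior of `F`, one can move slightly away from any
point of the affine span of `F` while staying in `F`. -/
lemma exists_forward {F : Set ((Fin n → ℝ) × ℝ)} {z y : (Fin n → ℝ) × ℝ}
    (hz : z ∈ intrinsicInterior ℝ F) (hy : y ∈ affineSpan ℝ F) :
    ∃ ε : ℝ, 0 < ε ∧ ε • (z - y) + z ∈ F := by
  obtain ⟨z', hz', hz'c⟩ := (mem_intrinsicInterior).1 hz
  have hzF : z ∈ F := intrinsicInterior_subset hz
  have hzS : z ∈ affineSpan ℝ F := subset_affineSpan ℝ F hzF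
  have hmem : ∀ ε : ℝ, ε • (z - y) + z ∈ affineSpan ℝ F := by
    intro ε
    have := AffineSubspace.smul_vsub_vadd_mem (affineSpan ℝ F) ε hzS hy hzS
    simpa [vsub_eq_sub, vadd_eq_add] using this
  set c : ℝ → (affineSpan ℝ F : Set ((Fin n → ℝ) × ℝ)) := fun ε => ⟨ε • (z - y) + z, hmem ε⟩
    with hc
  have hcont : Continuous c := by
    apply Continuous.subtype_mk
    exact (continuous_id.smul continuous_const).add continuous_const
  have hc0 : c 0 = z' := by
    apply Subtype.ext
    show (0 : ℝ) • (z - y) + z = (z' : (Fin n → ℝ) × ℝ)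
    rw [zero_smul, zero_add, hz'c]
  have hopen : IsOpen (c ⁻¹' (interior ((↑) ⁻¹' F : Set (affineSpan ℝ F)))) :=
    isOpen_interior.preimage hcont
  have h0 : (0 : ℝ) ∈ c ⁻¹' (interior ((↑) ⁻¹' F : Set (affineSpan ℝ F))) := by
    rw [Set.mem_preimage, hc0]
    exact hz'
  obtain ⟨r, hr, hball⟩ := Metric.isOpen_iff.1 hopen 0 h0
  refine ⟨r / 2, by linarith, ?_⟩
  have : (r / 2 : ℝ) ∈ Metric.ball (0 : ℝ) r := by
    simp only [Metric.mem_ball, Real.dist_eq, sub_zero]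
    rw [abs_of_pos (by linarith)]
    linarith
  have := interior_subset (hball this)
  exact this

/-- The affine subspace `{w | ℓ_x w = M}`. -/
noncomputable def levelAff (x : Fin n → ℝ) (M : ℝ) : AffineSubspace ℝ ((Fin n → ℝ) × ℝ) where
  carrier := {w | ell x w = M}
  smul_vsub_vadd_mem' := by
    intro c p1 p2 p3 h1 h2 h3
    show ell x (c • (p1 -ᵥ p2) +ᵥ p3) = M
    rw [vsub_eq_sub, vadd_eq_add, ell_add, ell_smul, ell_sub]
    rw [Set.mem_setOf_eq] at h1 h2 h3
    rw [h1, h2, h3]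
    ring

lemma mem_levelAff {x : Fin n → ℝ} {M : ℝ} {w : (Fin n → ℝ) × ℝ} :
    w ∈ levelAff x M ↔ ell x w = M := Iff.rfl

/-- Pinching: on a face point in the intrinsic interior, level-set maximality propagates. -/
lemma subset_level_face {Hs F : Set ((Fin n → ℝ) × ℝ)} {y : Fin n → ℝ} {Mv : ℝ}
    (hH : ∀ w ∈ Hs, ell y w ≤ Mv) {z : (Fin n → ℝ) × ℝ}
    (hzrel : z ∈ intrinsicInterior ℝ F) (hFH : F ⊆ Hs)
    (hz : ell y z = Mv) : ∀ w ∈ F, ell y w = Mv := by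
  intro w hw
  obtain ⟨ε, hε, hq⟩ := exists_forward hzrel (subset_affineSpan ℝ F hw)
  set q := ε • (z - w) + z with hqdef
  have hq1 : ell y q ≤ Mv := hH q (hFH hq)
  have hw1 : ell y w ≤ Mv := hH w (hFH hw)
  have hcomb : ell y q = (1 + ε) * Mv - ε * ell y w := by
    rw [hqdef, ell_add, ell_smul, ell_sub, hz]
    ring
  nlinarith

lemma sdim_mono {A B : Set ((Fin n → ℝ) × ℝ)} (h : A ⊆ B) : sdim A ≤ sdim B := by
  have hle : affineSpan ℝ A ≤ affineSpan ℝ B := affineSpan_mono ℝ h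
  exact Submodule.finrank_mono (AffineSubspace.direction_le hle)

lemma affSpan_eq_of_subset_of_sdim_le {A B : Set ((Fin n → ℝ) × ℝ)} (hAB : A ⊆ B)
    (hne : A.Nonempty) (hd : sdim B ≤ sdim A) : affineSpan ℝ A = affineSpan ℝ B := by
  obtain ⟨a, ha⟩ := hne
  have hle : affineSpan ℝ A ≤ affineSpan ℝ B := affineSpan_mono ℝ hAB
  have hdir : (affineSpan ℝ A).direction = (affineSpan ℝ B).direction :=
    Submodule.eq_of_le_of_finrank_le (AffineSubspace.direction_le hle) hd
  exact AffineSubspace.ext_of_direction_eq hdir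
    ⟨a, subset_affineSpan ℝ A ha, subset_affineSpan ℝ B (hAB ha)⟩

/-- If `G ⊆ Hs` lies in a level set of `ℓ_x` but some point of `Hs` is off that level,
then `G` spans strictly less than `Hs`. -/
lemma sdim_lt_of_level {G Hs : Set ((Fin n → ℝ) × ℝ)} {x : Fin n → ℝ} {M : ℝ}
    (hGH : G ⊆ Hs) (hlev : ∀ w ∈ G, ell x w = M) {z w : (Fin n → ℝ) × ℝ}
    (hzG : z ∈ G) (hwH : w ∈ Hs) (hw : ell x w ≠ M) : sdim G < sdim Hs := by
  rcases lt_or_ge (sdim G) (sdim Hs) with h | h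
  · exact h
  · exfalso
    have hspan : affineSpan ℝ G = affineSpan ℝ Hs :=
      affSpan_eq_of_subset_of_sdim_le hGH ⟨z, hzG⟩ h
    have hG_level : affineSpan ℝ G ≤ levelAff x M := affineSpan_le.2 hlev
    have : w ∈ affineSpan ℝ G := hspan ▸ subset_affineSpan ℝ Hs hwH
    exact hw (hG_level this)

/-- Key transfer lemma: if `z` is in the relative interior of a facet `Fp` of `Hs` and is a
maximizer both of `ℓ_x` and of `ℓ_y` over `Hs`, then any `ℓ_y`-maximizer of `Hs` is also an
`ℓ_x`-maximizer. -/
lemma transfer_level {Hs Fp : Set ((Fin n → ℝ) × ℝ)} {x y : Fin n → ℝ} {Mx My : ℝ}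
    {z zb : (Fin n → ℝ) × ℝ}
    (hFH : Fp ⊆ Hs)
    (hzrel : z ∈ intrinsicInterior ℝ Fp)
    (hdim : sdim Fp + 1 = sdim Hs)
    (hHx : ∀ w ∈ Hs, ell x w ≤ Mx) (hzx : ell x z = Mx)
    (hHy : ∀ w ∈ Hs, ell y w ≤ My) (hzy : ell y z = My)
    (hdown : z - ((0 : Fin n → ℝ), (1 : ℝ)) ∈ Hs)
    (hzb : zb ∈ Hs) (hzby : ell y zb = My) :
    ell x zb = Mx := by
  set G : Set ((Fin n → ℝ) × ℝ) := {w ∈ Hs | ell y w = My} with hG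
  have hGH : G ⊆ Hs := fun w hw => hw.1
  have hzG : z ∈ G := ⟨intrinsicInterior_subset hzrel |> hFH, hzy⟩
  have hzbG : zb ∈ G := ⟨hzb, hzby⟩
  have hFpG : Fp ⊆ G := by
    intro w hw
    exact ⟨hFH hw, subset_level_face hHy hzrel hFH hzy w hw⟩
  have hlevG : ∀ w ∈ G, ell y w = My := fun w hw => hw.2
  have hoff : ell y (z - ((0 : Fin n → ℝ), (1 : ℝ))) ≠ My := by
    rw [ell_sub, hzy]
    have : ell y ((0 : Fin n → ℝ), (1 : ℝ)) = 1 := by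
      show (1 : ℝ) + dotR 0 y = 1
      rw [dotR_zero_left]; ring
    rw [this]
    intro hcontra
    linarith [hcontra]
  have hlt : sdim G < sdim Hs := sdim_lt_of_level hGH hlevG hzG hdown hoff
  have hGle : sdim G ≤ sdim Fp := by omega
  have hspan : affineSpan ℝ Fp = affineSpan ℝ G :=
    affSpan_eq_of_subset_of_sdim_le hFpG ⟨z, intrinsicInterior_subset hzrel⟩ hGle
  have hFp_level : affineSpan ℝ Fp ≤ levelAff x Mx :=
    affineSpan_le.2 (subset_level_face hHx hzrel hFH hzx)
  have : zb ∈ affineSpan ℝ Fp := hspan ▸ subset_affineSpan ℝ G hzbG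
  exact hFp_level this

end CEAux3
section CEAux4

open Set

variable {n : ℕ}

/-- A non-vertical facet of a convex set containing a vertical downward ray supports a
linear functional of the form `ℓ_{x'}` maximized at any relative-interior point. -/
lemma facet_support {H F : Set ((Fin n → ℝ) × ℝ)} (hconv : Convex ℝ H)
    (hface : IsFaceOf F H) (hdim : sdim F + 1 = sdim H) (hvert : ¬ IsVert F)
    {z' : (Fin n → ℝ) × ℝ} (hz' : z' ∈ intrinsicInterior ℝ F)
    (hdown : z' - ((0 : Fin n → ℝ), (1 : ℝ)) ∈ H) :
    ∃ x' : Fin n → ℝ, ∀ w ∈ H, ell x' w ≤ ell x' z' := by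
  have hFH : F ⊆ H := hface.2.1
  have hz'F : z' ∈ F := intrinsicInterior_subset hz'
  have hz'H : z' ∈ H := hFH hz'F
  set U := (affineSpan ℝ F).direction with hU
  set W := (affineSpan ℝ H).direction with hW
  have hUW : U ≤ W := AffineSubspace.direction_le (affineSpan_mono ℝ hFH)
  have hfr : Module.finrank ℝ U + 1 = Module.finrank ℝ W := hdim
  have hUneW : U ≠ W := fun h => by rw [h] at hfr; omega
  obtain ⟨w₀, hw₀W, hw₀U⟩ := SetLike.exists_of_lt (lt_of_le_of_ne hUW hUneW)
  have hquot : U.mkQ w₀ ≠ 0 := by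
    rw [Submodule.mkQ_apply, Ne, Submodule.Quotient.mk_eq_zero]; exact hw₀U
  obtain ⟨φ, hφ⟩ : ∃ φ : Module.Dual ℝ (((Fin n → ℝ) × ℝ) ⧸ U), φ (U.mkQ w₀) ≠ 0 := by
    by_contra hc; push_neg at hc
    exact hquot ((Module.forall_dual_apply_eq_zero_iff ℝ _).1 fun φ => hc φ)
  have hψ₀U : ∀ u ∈ U, (φ.comp U.mkQ) u = 0 := by
    intro u hu
    have h0 : U.mkQ u = 0 := by rwa [Submodule.mkQ_apply, Submodule.Quotient.mk_eq_zero]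
    show φ (U.mkQ u) = 0
    rw [h0, map_zero]
  have hψ₀w₀ : (φ.comp U.mkQ) w₀ ≠ 0 := hφ
  have hmemW : ∀ w ∈ H, ∀ w' ∈ H, w - w' ∈ W := by
    intro w hw w' hw'
    have := AffineSubspace.vsub_mem_direction (subset_affineSpan ℝ H hw)
      (subset_affineSpan ℝ H hw')
    simpa [vsub_eq_sub] using this
  have hkerW : ∀ ψ : Module.Dual ℝ ((Fin n → ℝ) × ℝ), (∀ u ∈ U, ψ u = 0) → ψ w₀ ≠ 0 →
      ∀ w ∈ W, ψ w = 0 → w ∈ U := by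
    intro ψ hψU hψw₀ w hwW hψw
    set K := (LinearMap.ker ψ) ⊓ W with hK
    have hUK : U ≤ K := le_inf (fun u hu => LinearMap.mem_ker.2 (hψU u hu)) hUW
    have hKW : K ≤ W := inf_le_right
    have hKneW : K ≠ W := by
      intro h
      have hw₀K : w₀ ∈ K := h ▸ hw₀W
      exact hψw₀ (LinearMap.mem_ker.1 hw₀K.1)
    have hlt : Module.finrank ℝ K < Module.finrank ℝ W :=
      Submodule.finrank_lt_finrank_of_lt (lt_of_le_of_ne hKW hKneW)
    have hUeqK : U = K := Submodule.eq_of_le_of_finrank_le hUK (by omega)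
    rw [hUeqK]
    exact ⟨LinearMap.mem_ker.2 hψw, hwW⟩
  have hkey : ∀ ψ : Module.Dual ℝ ((Fin n → ℝ) × ℝ), (∀ u ∈ U, ψ u = 0) → ψ w₀ ≠ 0 →
      ¬ ((∃ w ∈ H, 0 < ψ (w - z')) ∧ (∃ w ∈ H, ψ (w - z') < 0)) := by
    rintro ψ hψU hψw₀ ⟨⟨wp, hwp, hP⟩, ⟨wm, hwm, hN⟩⟩
    set P := ψ (wp - z') with hPd
    set N := ψ (wm - z') with hNd
    set lam := P / (P - N) with hlam
    have hPN : 0 < P - N := by linarith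
    have hlam0 : 0 < lam := div_pos hP hPN
    have hlam1 : lam < 1 := (div_lt_one hPN).2 (by linarith)
    set u := (1 - lam) • wp + lam • wm with hu
    have huH : u ∈ H := hconv hwp hwm (by linarith) (le_of_lt hlam0) (by ring)
    have hψu : ψ (u - z') = 0 := by
      have hsplit : u - z' = (1 - lam) • (wp - z') + lam • (wm - z') := by
        rw [hu]
        match_scalars <;> ring
      rw [hsplit, map_add, map_smul, map_smul, smul_eq_mul, smul_eq_mul, ← hPd, ← hNd]
      rw [hlam]
      field_simp
      ring
    have huW : u - z' ∈ W := hmemW u huH z' hz'H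
    have huU : u - z' ∈ U := hkerW ψ hψU hψw₀ _ huW hψu
    have huSpan : u ∈ affineSpan ℝ F := by
      have := AffineSubspace.vadd_mem_of_mem_direction huU (subset_affineSpan ℝ F hz'F)
      simpa [vadd_eq_add, sub_add_cancel] using this
    obtain ⟨ε, hε, hq⟩ := exists_forward hz' huSpan
    have h1ε : (0 : ℝ) < 1 + ε := by linarith
    have hseg : z' ∈ openSegment ℝ u (ε • (z' - u) + z') := by
      refine ⟨ε / (1 + ε), 1 / (1 + ε), by positivity, by positivity,
        by field_simp; ring, ?_⟩
      match_scalars <;> (field_simp; try ring)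
    have huF := hface.2.2 huH (hFH hq) hz'F hseg
    have hseg2 : u ∈ openSegment ℝ wp wm := ⟨1 - lam, lam, by linarith, hlam0, by ring, rfl⟩
    have hwpF := hface.2.2 hwp hwm huF hseg2
    have hwpU : wp - z' ∈ U := by
      have := AffineSubspace.vsub_mem_direction (subset_affineSpan ℝ F hwpF)
        (subset_affineSpan ℝ F hz'F)
      simpa [vsub_eq_sub] using this
    have : ψ (wp - z') = 0 := hψU _ hwpU
    rw [← hPd] at this
    linarith
  have honeside : ∃ ψ : Module.Dual ℝ ((Fin n → ℝ) × ℝ),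
      (∀ u ∈ U, ψ u = 0) ∧ ψ w₀ ≠ 0 ∧ ∀ w ∈ H, ψ (w - z') ≤ 0 := by
    by_cases hpos : ∃ w ∈ H, 0 < (φ.comp U.mkQ) (w - z')
    · refine ⟨-(φ.comp U.mkQ), fun u hu => by simp [hψ₀U u hu], by simpa using hψ₀w₀, ?_⟩
      intro w hw
      by_contra hc
      push_neg at hc
      have hneg : (φ.comp U.mkQ) (w - z') < 0 := by
        have : 0 < -((φ.comp U.mkQ) (w - z')) := by simpa using hc
        linarith
      exact hkey _ hψ₀U hψ₀w₀ ⟨hpos, ⟨w, hw, hneg⟩⟩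
    · push_neg at hpos
      exact ⟨φ.comp U.mkQ, hψ₀U, hψ₀w₀, fun w hw => hpos w hw⟩
  obtain ⟨ψ, hψU, hψw₀, hψside⟩ := honeside
  have hγ0 : 0 ≤ ψ ((0 : Fin n → ℝ), (1 : ℝ)) := by
    have h1 := hψside _ hdown
    have heq : (z' - ((0 : Fin n → ℝ), (1 : ℝ))) - z' = -((0 : Fin n → ℝ), (1 : ℝ)) := by abel
    rw [heq, map_neg] at h1
    linarith
  have he1W : ((0 : Fin n → ℝ), (1 : ℝ)) ∈ W := by
    have h1 := hmemW z' hz'H (z' - ((0 : Fin n → ℝ), (1 : ℝ))) hdown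
    have heq : z' - (z' - ((0 : Fin n → ℝ), (1 : ℝ))) = ((0 : Fin n → ℝ), (1 : ℝ)) := by abel
    rwa [heq] at h1
  have hγne : ψ ((0 : Fin n → ℝ), (1 : ℝ)) ≠ 0 := by
    intro h0
    exact hvert (hkerW ψ hψU hψw₀ _ he1W h0)
  have hγpos : 0 < ψ ((0 : Fin n → ℝ), (1 : ℝ)) := lt_of_le_of_ne hγ0 (Ne.symm hγne)
  set γ := ψ ((0 : Fin n → ℝ), (1 : ℝ)) with hγ
  have hγne' : γ ≠ 0 := ne_of_gt hγpos
  set x' : Fin n → ℝ := fun i => ψ ((Pi.single i 1 : Fin n → ℝ), (0 : ℝ)) / γ with hx'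
  have hsingle : ∀ i : Fin n, (Pi.single i (1 : ℝ) : Fin n → ℝ)
      = fun j => if i = j then 1 else 0 := by
    intro i; funext j; rw [Pi.single_apply]; exact if_congr eq_comm rfl rfl
  have hrep : ∀ w : (Fin n → ℝ) × ℝ, ψ w = γ * ell x' w := by
    intro w
    have hdecomp : w = ((w.1, (0 : ℝ)) : (Fin n → ℝ) × ℝ)
        + w.2 • (((0 : Fin n → ℝ), (1 : ℝ)) : (Fin n → ℝ) × ℝ) := by
      refine Prod.ext_iff.2 ⟨?_, ?_⟩ <;> simp
    have hfst : ((w.1, (0 : ℝ)) : (Fin n → ℝ) × ℝ)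
        = ∑ i, w.1 i • (((Pi.single i 1 : Fin n → ℝ), (0 : ℝ)) : (Fin n → ℝ) × ℝ) := by
      refine Prod.ext_iff.2 ⟨?_, ?_⟩
      · rw [Prod.fst_sum]
        simp only [Prod.smul_mk]
        show w.1 = ∑ i, w.1 i • (Pi.single i 1 : Fin n → ℝ)
        conv_lhs => rw [pi_eq_sum_univ w.1]
        exact Finset.sum_congr rfl fun i _ => by rw [hsingle i]
      · rw [Prod.snd_sum]
        simp
    have hψw : ψ w = (∑ i, w.1 i * ψ (((Pi.single i 1 : Fin n → ℝ), (0 : ℝ)))) + w.2 * γ := by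
      conv_lhs => rw [hdecomp]
      rw [map_add, hfst, map_sum, map_smul, smul_eq_mul, hγ]
      congr 1
      exact Finset.sum_congr rfl fun i _ => by rw [map_smul, smul_eq_mul]
    rw [hψw]
    show _ = γ * (w.2 + dotR w.1 x')
    have hdot : dotR w.1 x' = ∑ i, w.1 i * (ψ (((Pi.single i 1 : Fin n → ℝ), (0 : ℝ))) / γ) :=
      rfl
    rw [hdot, mul_add, Finset.mul_sum]
    have hterm : ∀ i : Fin n, γ * (w.1 i * (ψ (((Pi.single i 1 : Fin n → ℝ), (0 : ℝ))) / γ))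
        = w.1 i * ψ (((Pi.single i 1 : Fin n → ℝ), (0 : ℝ))) := by
      intro i; field_simp
    rw [Finset.sum_congr rfl fun i _ => hterm i]
    ring
  refine ⟨x', fun w hw => ?_⟩
  have h1 := hψside w hw
  rw [map_sub, hrep w, hrep z'] at h1
  have h2 : γ * ell x' w ≤ γ * ell x' z' := by linarith
  exact le_of_mul_le_mul_left h2 hγpos

end CEAux4
/-- **Key diagonal dominance inequality for the Canny-Emiris construction.** If the system
`f` has no common tropical root, `E = (Q + δ) ∩ ℤ^n` is a nonempty Canny-Emiris set,
`p ∈ E` has row content `(j, a_j)` (`x ∈ V` being the vector attached to `p` by genericity,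
`C_j = 𝒞(x, h_j) = {a_j}` a singleton, `j` maximal with this property), then for all
`p' ∈ E` and `a'_j ∈ ℤ^n` with `p' = p - a_j + a'_j`,
`h(p' - δ) ≥ h_j(a'_j) + ĥ_j(p - δ - a_j)`, with equality iff `p' = p`. -/
theorem canny_emiris_diagonal_dominance {n k : ℕ}
    (f : Fin k → (Fin n → ℤ) → Trop) (hfin : ∀ i, (tsupp (f i)).Finite)
    (hnoroot : ¬ ∃ x : Fin n → ℝ, ∀ i, IsTropRoot (f i) x)
    (δ : Fin n → ℝ) (hδ : GenericDelta (NPoly f) (HypSum f) δ)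
    (hEne : {p : Fin n → ℤ | zR p - δ ∈ NPoly f}.Nonempty)
    (p : Fin n → ℤ) (hp : zR p - δ ∈ NPoly f)
    (x : Fin n → ℝ) (hxV : x ∈ (affineSpan ℝ (NPoly f)).direction)
    (t : ℝ) (ht : IsGreatest {s : ℝ | ((zR p - δ, s) : (Fin n → ℝ) × ℝ) ∈ HypSum f} t)
    (hrel : ((zR p - δ, t) : (Fin n → ℝ) × ℝ) ∈ intrinsicInterior ℝ (FcalS x (HypSum f)))
    (j : Fin k) (a : Fin n → ℤ)
    (hCj : CsetS x (hypoF (f j)) = {zR a})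
    (hjmax : ∀ i : Fin k, j < i → ¬ ∃ b : Fin n → ℝ, CsetS x (hypoF (f i)) = {b}) :
    ∀ p' : Fin n → ℤ, zR p' - δ ∈ NPoly f → ∀ a' : Fin n → ℤ, p' = p - a + a' →
      (hvalS (hypoF (f j)) (zR a') +
          hvalS (∑ i ∈ Finset.univ.erase j, hypoF (f i)) (zR p - δ - zR a)
        ≤ hvalS (HypSum f) (zR p' - δ)) ∧
      (hvalS (HypSum f) (zR p' - δ)
          = hvalS (hypoF (f j)) (zR a') +
              hvalS (∑ i ∈ Finset.univ.erase j, hypoF (f i)) (zR p - δ - zR a)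
        ↔ p' = p) := by
  classical
  set Hj : Set ((Fin n → ℝ) × ℝ) := hypoF (f j) with hHjdef
  set Hhat : Set ((Fin n → ℝ) × ℝ) := ∑ i ∈ Finset.univ.erase j, hypoF (f i) with hHhatdef
  have hHsplit : HypSum f = Hj + Hhat :=
    (Finset.add_sum_erase Finset.univ (fun i => hypoF (f i)) (Finset.mem_univ j)).symm
  have hsuppne : ∀ i, (tsupp (f i)).Nonempty := by
    intro i
    rcases Set.eq_empty_or_nonempty (tsupp (f i)) with he | h
    · exfalso
      have hNe : NPoly f = ∅ := by
        apply sum_sets_empty (Finset.mem_univ i)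
        rw [he]
        simp
      rw [hNe] at hp
      exact hp
    · exact h
  have hk1 : (Finset.univ : Finset (Fin k)).Nonempty := ⟨j, Finset.mem_univ j⟩
  have hDn_sum : ∀ s : Finset (Fin k), s.Nonempty → (∑ _i ∈ s, Dn n) = Dn n := by
    intro s hs
    induction hs using Finset.Nonempty.cons_induction with
    | singleton i => simp
    | cons i s hi hs ih => rw [Finset.sum_cons, ih, Dn_add_Dn]
  have hHKD : HypSum f = (∑ i, convexHull ℝ (Gpts (f i))) + Dn n := by
    show (∑ i, hypoF (f i)) = _
    rw [Finset.sum_congr rfl fun i _ => hypoF_eq (f i), Finset.sum_add_distrib,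
      hDn_sum _ hk1]
  have hKcomp : IsCompact (∑ i, convexHull ℝ (Gpts (f i))) :=
    isCompact_sum_sets fun i _ => (Gpts_finite (hfin i)).isCompact_convexHull ℝ
  have hHdown : ∀ (u : Fin n → ℝ) (s s' : ℝ),
      ((u, s) : (Fin n → ℝ) × ℝ) ∈ HypSum f → s' ≤ s → (u, s') ∈ HypSum f := by
    intro u s s' hmem hle
    rw [hHKD] at hmem ⊢
    exact KD_down hmem hle
  have hHjKD : Hj = convexHull ℝ (Gpts (f j)) + Dn n := hypoF_eq (f j)
  have hKjcomp : IsCompact (convexHull ℝ (Gpts (f j))) :=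
    (Gpts_finite (hfin j)).isCompact_convexHull ℝ
  have hHconv : Convex ℝ (HypSum f) :=
    convex_sum_sets fun i _ => (convex_convexHull ℝ _ : Convex ℝ (hypoF (f i)))
  set m : Fin k → (Fin n → ℝ) → ℝ := fun i y => msup (f i) (hfin i) (hsuppne i) y with hm
  set M : (Fin n → ℝ) → ℝ := fun y => ∑ i, m i y with hM
  have hbound_i : ∀ (i : Fin k) (y : Fin n → ℝ) (z : (Fin n → ℝ) × ℝ),
      z ∈ hypoF (f i) → ell y z ≤ m i y := fun i y z hz => ell_le_msup _ _ _ hz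
  have hbound_H : ∀ (y : Fin n → ℝ) (z : (Fin n → ℝ) × ℝ), z ∈ HypSum f → ell y z ≤ M y := by
    intro y z hz
    obtain ⟨g, hg, hsum⟩ := (Set.mem_finset_sum Finset.univ (fun i => hypoF (f i)) z).1 hz
    rw [← hsum, ell_sum]
    exact Finset.sum_le_sum fun i _ => hbound_i i y (g i) (hg (Finset.mem_univ i))
  have hbound_Hhat : ∀ (y : Fin n → ℝ) (z : (Fin n → ℝ) × ℝ), z ∈ Hhat →
      ell y z ≤ ∑ i ∈ Finset.univ.erase j, m i y := by
    intro y z hz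
    obtain ⟨g, hg, hsum⟩ :=
      (Set.mem_finset_sum (Finset.univ.erase j) (fun i => hypoF (f i)) z).1 hz
    rw [← hsum, ell_sum]
    exact Finset.sum_le_sum fun i hi => hbound_i i y (g i) (hg hi)
  have hbpt : ∀ y : Fin n → ℝ, ∃ b : (Fin n → ℝ) × ℝ, b ∈ HypSum f ∧ ell y b = M y := by
    intro y
    have hch : ∀ i : Fin k, ∃ α ∈ tsupp (f i), cf (f i) α + dotR (zR α) y = m i y :=
      fun i => exists_msup _ _ _
    choose αw hαw hval using hch
    refine ⟨∑ i, ((zR (αw i), cf (f i) (αw i)) : (Fin n → ℝ) × ℝ), ?_, ?_⟩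
    · exact (Set.mem_finset_sum _ _ _).2
        ⟨fun i => ((zR (αw i), cf (f i) (αw i)) : (Fin n → ℝ) × ℝ),
         fun {i} _ => graph_mem_hypoF (hαw i), rfl⟩
    · rw [ell_sum]
      exact Finset.sum_congr rfl fun i _ => hval i
  have hvalp : hvalS (HypSum f) (zR p - δ) = (t : EReal) := hval_eq_of_isGreatest ht
  have hzH : ((zR p - δ, t) : (Fin n → ℝ) × ℝ) ∈ HypSum f := ht.1
  have hzF : ((zR p - δ, t) : (Fin n → ℝ) × ℝ) ∈ FcalS x (HypSum f) :=
    intrinsicInterior_subset hrel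
  have hCs : (zR p - δ) ∈ CsetS x (HypSum f) := hzF.2
  have hMx : ell x ((zR p - δ, t) : (Fin n → ℝ) × ℝ) = M x := by
    refine le_antisymm (hbound_H x _ hzH) ?_
    obtain ⟨b, hbH, hbval⟩ := hbpt x
    have h1 : (b.2 : EReal) ≤ hvalS (HypSum f) b.1 := le_hval (by rwa [Prod.mk.eta])
    have h2 := hCs b.1
    have hchain : ((M x : ℝ) : EReal) ≤ ((ell x ((zR p - δ, t)) : ℝ) : EReal) := by
      calc ((M x : ℝ) : EReal) = ((b.2 + dotR b.1 x : ℝ) : EReal) := by rw [← hbval]; rfl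
        _ = (b.2 : EReal) + ((dotR b.1 x : ℝ) : EReal) := EReal.coe_add _ _
        _ ≤ hvalS (HypSum f) b.1 + ((dotR b.1 x : ℝ) : EReal) := add_le_add_left h1 _
        _ ≤ hvalS (HypSum f) (zR p - δ) + ((dotR (zR p - δ) x : ℝ) : EReal) := h2
        _ = ((t + dotR (zR p - δ) x : ℝ) : EReal) := by rw [hvalp, ← EReal.coe_add]
        _ = ((ell x ((zR p - δ, t)) : ℝ) : EReal) := rfl
    exact_mod_cast hchain
  obtain ⟨w, hw, hwsum⟩ :=
    (Set.mem_finset_sum Finset.univ (fun i => hypoF (f i)) ((zR p - δ, t))).1 hzH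
  have hell_le : ∀ i : Fin k, ell x (w i) ≤ m i x :=
    fun i => hbound_i i x _ (hw (Finset.mem_univ i))
  have hsum_ell : ∑ i, ell x (w i) = ∑ i, m i x := by
    rw [← ell_sum, hwsum]
    exact hMx
  have hell_eq : ∀ i : Fin k, ell x (w i) = m i x := by
    intro i
    by_contra hne'
    have hlt : ell x (w i) < m i x := lt_of_le_of_ne (hell_le i) hne'
    have := Finset.sum_lt_sum (fun i _ => hell_le i) ⟨i, Finset.mem_univ i, hlt⟩
    rw [hsum_ell] at this
    exact lt_irrefl _ this
  have hvalHj_le : ∀ (y : Fin n → ℝ) (u : Fin n → ℝ),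
      hvalS Hj u + ((dotR u y : ℝ) : EReal) ≤ ((m j y : ℝ) : EReal) :=
    fun y u => hval_add_coe_le fun r hr => hbound_i j y (u, r) hr
  have hwjC : (w j).1 ∈ CsetS x Hj := by
    intro w'
    refine le_trans (hvalHj_le x w') ?_
    have h1 : ((w j).2 : EReal) ≤ hvalS Hj (w j).1 :=
      le_hval (by rw [Prod.mk.eta]; exact hw (Finset.mem_univ j))
    calc ((m j x : ℝ) : EReal) = (((w j).2 + dotR (w j).1 x : ℝ) : EReal) := by
          rw [← hell_eq j]; rfl
      _ = ((w j).2 : EReal) + ((dotR (w j).1 x : ℝ) : EReal) := EReal.coe_add _ _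
      _ ≤ hvalS Hj (w j).1 + ((dotR (w j).1 x : ℝ) : EReal) := add_le_add_left h1 _
  have hwj1 : (w j).1 = zR a := by
    have hmem := hwjC
    rw [hCj] at hmem
    exact hmem
  set sj : ℝ := (w j).2 with hsj
  have hwjmem : ((zR a, sj) : (Fin n → ℝ) × ℝ) ∈ Hj := by
    rw [← hwj1, hsj, Prod.mk.eta]
    exact hw (Finset.mem_univ j)
  have hsj_dot : sj + dotR (zR a) x = m j x := by
    have h1 := hell_eq j
    rw [show ell x (w j) = (w j).2 + dotR (w j).1 x from rfl, hwj1] at h1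
    exact h1
  have hsjgreat : IsGreatest {r : ℝ | ((zR a, r) : (Fin n → ℝ) × ℝ) ∈ Hj} sj := by
    refine ⟨hwjmem, ?_⟩
    intro r hr
    have h2 : r + dotR (zR a) x ≤ m j x := hbound_i j x _ hr
    linarith
  have hvalHj_a : hvalS Hj (zR a) = (sj : EReal) := hval_eq_of_isGreatest hsjgreat
  set vR : Fin n → ℝ := zR p - δ - zR a with hvR
  set vhat : (Fin n → ℝ) × ℝ := ∑ i ∈ Finset.univ.erase j, w i with hvhat
  have hvhatmem : vhat ∈ Hhat :=
    (Set.mem_finset_sum _ _ _).2 ⟨w, fun {i} hi => hw (Finset.mem_univ i), rfl⟩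
  have hvhat_eq : vhat = ((vR, t - sj) : (Fin n → ℝ) × ℝ) := by
    have h1 : w j + vhat = ((zR p - δ, t) : (Fin n → ℝ) × ℝ) := by
      rw [hvhat, Finset.add_sum_erase _ _ (Finset.mem_univ j), hwsum]
    have h2 : vhat = ((zR p - δ, t) : (Fin n → ℝ) × ℝ) - w j := by rw [← h1]; abel
    rw [h2]
    refine Prod.ext_iff.2 ⟨?_, ?_⟩
    · show (zR p - δ) - (w j).1 = vR
      rw [hwj1]
    · show t - (w j).2 = t - sj
      rw [hsj]
  have hvhatval_x : ell x vhat = ∑ i ∈ Finset.univ.erase j, m i x := by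
    rw [hvhat, ell_sum]
    exact Finset.sum_congr rfl fun i _ => hell_eq i
  have hMhat_x : ∀ z ∈ Hhat, ell x z ≤ ell x vhat := by
    intro z hz
    rw [hvhatval_x]
    exact hbound_Hhat x z hz
  have hshatgreat : IsGreatest {r : ℝ | ((vR, r) : (Fin n → ℝ) × ℝ) ∈ Hhat} (t - sj) := by
    refine ⟨?_, ?_⟩
    · show ((vR, t - sj) : (Fin n → ℝ) × ℝ) ∈ Hhat
      rw [← hvhat_eq]
      exact hvhatmem
    intro r hr
    have h1 := hMhat_x _ hr
    rw [hvhat_eq] at h1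
    have h2 : r + dotR vR x ≤ (t - sj) + dotR vR x := h1
    linarith
  have hvalHhat : hvalS Hhat vR = ((t - sj : ℝ) : EReal) := hval_eq_of_isGreatest hshatgreat
  intro p' hp' a' hpa
  have hsplitp' : zR a' + vR = zR p' - δ := by
    rw [hpa, zR_add, zR_sub, hvR]
    abel
  have part1 : hvalS Hj (zR a') + hvalS Hhat vR ≤ hvalS (HypSum f) (zR p' - δ) := by
    by_cases hbot : hvalS Hj (zR a') = ⊥
    · rw [hbot, EReal.bot_add]
      exact bot_le
    · obtain ⟨r0, hr0⟩ := exists_mem_of_hval_ne_bot hbot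
      have hr0' : ((zR a', r0) : (Fin n → ℝ) × ℝ) ∈ convexHull ℝ (Gpts (f j)) + Dn n := by
        rw [← hHjKD]
        exact hr0
      obtain ⟨r1, hr1⟩ := exists_greatest_KD hKjcomp hr0'
      rw [← hHjKD] at hr1
      have hvala' : hvalS Hj (zR a') = (r1 : EReal) := hval_eq_of_isGreatest hr1
      rw [hvala', hvalHhat, ← EReal.coe_add]
      refine le_hval (H := HypSum f) ?_
      rw [hHsplit]
      refine ⟨(zR a', r1), hr1.1, (vR, t - sj), hshatgreat.1, ?_⟩
      show ((zR a', r1) : (Fin n → ℝ) × ℝ) + (vR, t - sj) = _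
      rw [Prod.mk_add_mk, hsplitp']
  refine ⟨part1, ?_, ?_⟩
  · intro heq
    by_contra hppne
    have ha'ne : a' ≠ a := by
      intro h
      apply hppne
      rw [hpa, h]
      funext i0
      simp
    have hzRne : zR a' ≠ zR a := fun h => ha'ne (zR_inj h)
    obtain ⟨t', ht'g, hF'u⟩ := hδ.2 p' hp'
    obtain ⟨F', hF'⟩ := hF'u.exists
    obtain ⟨hF'facet, hF'vert, hF'rel⟩ := hF'
    have hvalp' : hvalS (HypSum f) (zR p' - δ) = (t' : EReal) := hval_eq_of_isGreatest ht'g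
    have hbot' : hvalS Hj (zR a') ≠ ⊥ := by
      intro hb
      rw [hvalp', hb, EReal.bot_add] at heq
      exact (EReal.coe_ne_bot t') heq
    obtain ⟨r0, hr0⟩ := exists_mem_of_hval_ne_bot hbot'
    have hr0' : ((zR a', r0) : (Fin n → ℝ) × ℝ) ∈ convexHull ℝ (Gpts (f j)) + Dn n := by
      rw [← hHjKD]
      exact hr0
    obtain ⟨r', hr'⟩ := exists_greatest_KD hKjcomp hr0'
    rw [← hHjKD] at hr'
    have hvala' : hvalS Hj (zR a') = (r' : EReal) := hval_eq_of_isGreatest hr'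
    have ht'eq : t' = r' + (t - sj) := by
      rw [hvalp', hvala', hvalHhat, ← EReal.coe_add] at heq
      exact_mod_cast heq
    have hz'dec : ((zR p' - δ, t') : (Fin n → ℝ) × ℝ) = ((zR a', r') : (Fin n → ℝ) × ℝ)
        + ((vR, t - sj) : (Fin n → ℝ) × ℝ) := by
      refine Prod.ext_iff.2 ⟨?_, ?_⟩
      · show zR p' - δ = zR a' + vR
        rw [hsplitp']
      · show t' = r' + (t - sj)
        exact ht'eq
    have hz'H : ((zR p' - δ, t') : (Fin n → ℝ) × ℝ) ∈ HypSum f := ht'g.1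
    have hd : r' + dotR (zR a') x < m j x := by
      have hnotC : zR a' ∉ CsetS x Hj := by
        rw [hCj]
        exact hzRne
      rw [CsetS, Set.mem_setOf_eq] at hnotC
      push_neg at hnotC
      obtain ⟨w0, hw0⟩ := hnotC
      have h1 : hvalS Hj w0 + ((dotR w0 x : ℝ) : EReal) ≤ ((m j x : ℝ) : EReal) :=
        hvalHj_le x w0
      have h2 : hvalS Hj (zR a') + ((dotR (zR a') x : ℝ) : EReal) < ((m j x : ℝ) : EReal) :=
        lt_of_lt_of_le hw0 h1
      rw [hvala', ← EReal.coe_add] at h2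
      exact_mod_cast h2
    have hdownz' : ((zR p' - δ, t') : (Fin n → ℝ) × ℝ) - ((0 : Fin n → ℝ), (1 : ℝ))
        ∈ HypSum f := by
      have he : ((zR p' - δ, t') : (Fin n → ℝ) × ℝ) - ((0 : Fin n → ℝ), (1 : ℝ))
          = ((zR p' - δ, t' - 1) : (Fin n → ℝ) × ℝ) := by
        refine Prod.ext_iff.2 ⟨?_, ?_⟩
        · show (zR p' - δ) - 0 = zR p' - δ
          simp
        · rfl
      rw [he]
      exact hHdown _ t' (t' - 1) hz'H (by linarith)
    obtain ⟨x', hx'max⟩ :=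
      facet_support hHconv hF'facet.1 hF'facet.2 hF'vert hF'rel hdownz'
    have hMx' : ell x' ((zR p' - δ, t') : (Fin n → ℝ) × ℝ) = M x' := by
      refine le_antisymm (hbound_H x' _ hz'H) ?_
      obtain ⟨b, hbH, hbval⟩ := hbpt x'
      rw [← hbval]
      exact hx'max b hbH
    have hga' : ell x' ((zR a', r') : (Fin n → ℝ) × ℝ) ≤ m j x' := hbound_i j x' _ hr'.1
    have hgv : ell x' ((vR, t - sj) : (Fin n → ℝ) × ℝ)
        ≤ ∑ i ∈ Finset.univ.erase j, m i x' := by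
      refine hbound_Hhat x' _ ?_
      exact hshatgreat.1
    have hMsplit' : m j x' + ∑ i ∈ Finset.univ.erase j, m i x' = M x' :=
      Finset.add_sum_erase Finset.univ (fun i => m i x') (Finset.mem_univ j)
    have hsum' : ell x' ((zR a', r') : (Fin n → ℝ) × ℝ)
        + ell x' ((vR, t - sj) : (Fin n → ℝ) × ℝ) = M x' := by
      rw [← ell_add, ← hz'dec, hMx']
    have hvmax' : ell x' ((vR, t - sj) : (Fin n → ℝ) × ℝ)
        = ∑ i ∈ Finset.univ.erase j, m i x' := by linarith
    have hMhat_x' : ∀ z ∈ Hhat, ell x' z ≤ ell x' ((vR, t - sj) : (Fin n → ℝ) × ℝ) := by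
      intro z hz
      rw [hvmax']
      exact hbound_Hhat x' z hz
    have hMhat_xv : ∀ z ∈ Hhat, ell x z ≤ ell x ((vR, t - sj) : (Fin n → ℝ) × ℝ) := by
      intro z hz
      rw [← hvhat_eq]
      exact hMhat_x z hz
    have hvx : ell x ((vR, t - sj) : (Fin n → ℝ) × ℝ) = M x - m j x := by
      have h1 : ell x ((vR, t - sj) : (Fin n → ℝ) × ℝ)
          = ∑ i ∈ Finset.univ.erase j, m i x := by
        rw [← hvhat_eq]
        exact hvhatval_x
      have h2 : m j x + ∑ i ∈ Finset.univ.erase j, m i x = M x :=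
        Finset.add_sum_erase Finset.univ (fun i => m i x) (Finset.mem_univ j)
      linarith
    obtain ⟨t0, ht0g, hFpu⟩ := hδ.2 p hp
    have ht0 : t0 = t := ht0g.unique ht
    obtain ⟨Fp, hFp⟩ := hFpu.exists
    obtain ⟨hFpfacet, hFpvert, hFprel⟩ := hFp
    rw [ht0] at hFprel
    have hFpH : Fp ⊆ HypSum f := hFpfacet.1.2.1
    have hdownz : ((zR p - δ, t) : (Fin n → ℝ) × ℝ) - ((0 : Fin n → ℝ), (1 : ℝ))
        ∈ HypSum f := by
      have he : ((zR p - δ, t) : (Fin n → ℝ) × ℝ) - ((0 : Fin n → ℝ), (1 : ℝ))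
          = ((zR p - δ, t - 1) : (Fin n → ℝ) × ℝ) := by
        refine Prod.ext_iff.2 ⟨?_, ?_⟩
        · show (zR p - δ) - 0 = zR p - δ
          simp
        · rfl
      rw [he]
      exact hHdown _ t (t - 1) hzH (by linarith)
    have hzdec : ((zR p - δ, t) : (Fin n → ℝ) × ℝ)
        = ((zR a, sj) : (Fin n → ℝ) × ℝ) + ((vR, t - sj) : (Fin n → ℝ) × ℝ) := by
      refine Prod.ext_iff.2 ⟨?_, ?_⟩
      · show zR p - δ = zR a + vR
        rw [hvR]
        abel
      · show t = sj + (t - sj)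
        ring
    set g0 : (Fin n → ℤ) → ℝ :=
      fun α => (sj + dotR (zR a) x) - (cf (f j) α + dotR (zR α) x) with hg0def
    set g1 : (Fin n → ℤ) → ℝ :=
      fun α => (sj + dotR (zR a) x') - (cf (f j) α + dotR (zR α) x') with hg1def
    have hg0nonneg : ∀ α ∈ tsupp (f j), 0 ≤ g0 α := by
      intro α hα
      have h1 : cf (f j) α + dotR (zR α) x ≤ m j x := le_msup (hfin j) (hsuppne j) x hα
      have h2 : g0 α = m j x - (cf (f j) α + dotR (zR α) x) := by
        rw [hg0def, hsj_dot]
      linarith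
    have hg0strict : ∀ α ∈ tsupp (f j), g0 α = 0 → zR α = zR a ∧ cf (f j) α = sj := by
      intro α hα h0
      have hcfeq : cf (f j) α + dotR (zR α) x = m j x := by
        have h2 : g0 α = (sj + dotR (zR a) x) - (cf (f j) α + dotR (zR α) x) := rfl
        rw [h2] at h0
        linarith [hsj_dot]
      have hvalα : hvalS Hj (zR α) = ((cf (f j) α : ℝ) : EReal) := by
        refine le_antisymm (hval_le fun r hr => ?_) (le_hval (graph_mem_hypoF hα))
        have h3 : r + dotR (zR α) x ≤ m j x := hbound_i j x (zR α, r) hr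
        linarith
      have hCmem : zR α ∈ CsetS x Hj := by
        intro w'
        refine le_trans (hvalHj_le x w') ?_
        rw [hvalα, ← EReal.coe_add, hcfeq]
      rw [hCj] at hCmem
      refine ⟨hCmem, ?_⟩
      rw [hCmem, hvalHj_a] at hvalα
      have := hvalα.symm
      exact_mod_cast this
    by_cases hT : ∃ α ∈ tsupp (f j), g1 α < 0
    · -- Case `T ≠ ∅`: interpolate between `x` and `x'`.
      set ftj := (hfin j).toFinset with hftj
      set T : Finset (Fin n → ℤ) := ftj.filter fun α => g1 α < 0 with hTdef
      have hTne : T.Nonempty := by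
        obtain ⟨α, hα, hαneg⟩ := hT
        exact ⟨α, Finset.mem_filter.2 ⟨(hfin j).mem_toFinset.2 hα, hαneg⟩⟩
      have hTsupp : ∀ α ∈ T, α ∈ tsupp (f j) :=
        fun α hα => (hfin j).mem_toFinset.1 (Finset.mem_filter.1 hα).1
      have hTneg : ∀ α ∈ T, g1 α < 0 := fun α hα => (Finset.mem_filter.1 hα).2
      set rq : (Fin n → ℤ) → ℝ := fun α => g0 α / (g0 α - g1 α) with hrq
      set θ : ℝ := T.inf' hTne rq with hθdef
      obtain ⟨β, hβT, hβeq⟩ := Finset.exists_mem_eq_inf' hTne rq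
      have hβsupp : β ∈ tsupp (f j) := hTsupp β hβT
      have hβden : 0 < g0 β - g1 β := by
        have := hg0nonneg β hβsupp
        have := hTneg β hβT
        linarith
      have hθ0 : 0 ≤ θ := by
        rw [hθdef]
        apply Finset.le_inf'
        intro α hα
        have h1 := hg0nonneg α (hTsupp α hα)
        have h2 := hTneg α hα
        have hden : 0 < g0 α - g1 α := by linarith
        rw [hrq]
        exact div_nonneg h1 (le_of_lt hden)
      have hθβ : θ = rq β := hβeq
      have hθ1 : θ < 1 := by
        rw [hθβ, hrq]
        rw [div_lt_one hβden]
        have := hTneg β hβT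
        linarith
      set xθ : Fin n → ℝ := x + θ • (x' - x) with hxθ
      have he0 : ∀ α : Fin n → ℤ, ell x ((zR a, sj) : (Fin n → ℝ) × ℝ)
          - ell x ((zR α, cf (f j) α) : (Fin n → ℝ) × ℝ) = g0 α := by
        intro α
        rw [hg0def]
        show ell x ((zR a, sj) : (Fin n → ℝ) × ℝ)
          - ell x ((zR α, cf (f j) α) : (Fin n → ℝ) × ℝ)
          = (sj + dotR (zR a) x) - (cf (f j) α + dotR (zR α) x)
        rfl
      have he1 : ∀ α : Fin n → ℤ, ell x' ((zR a, sj) : (Fin n → ℝ) × ℝ)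
          - ell x' ((zR α, cf (f j) α) : (Fin n → ℝ) × ℝ) = g1 α := by
        intro α
        rw [hg1def]
        show ell x' ((zR a, sj) : (Fin n → ℝ) × ℝ)
          - ell x' ((zR α, cf (f j) α) : (Fin n → ℝ) × ℝ)
          = (sj + dotR (zR a) x') - (cf (f j) α + dotR (zR α) x')
        rfl
      have hgθ : ∀ α ∈ tsupp (f j),
          ell xθ ((zR α, cf (f j) α) : (Fin n → ℝ) × ℝ)
            ≤ ell xθ ((zR a, sj) : (Fin n → ℝ) × ℝ) := by
        intro α hα
        rw [hxθ, ell_interp, ell_interp]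
        have h0 : 0 ≤ g0 α := hg0nonneg α hα
        refine interp_le (he0 α) (he1 α) ?_
        by_cases hαT : α ∈ T
        · have hneg := hTneg α hαT
          have hle : θ ≤ rq α := by
            rw [hθdef]
            exact Finset.inf'_le _ hαT
          have hden : 0 < g0 α - g1 α := by linarith
          have hroot : rq α * (g0 α - g1 α) = g0 α := by
            rw [hrq]
            field_simp [ne_of_gt hden]
          calc θ * (g0 α - g1 α) ≤ rq α * (g0 α - g1 α) :=
                mul_le_mul_of_nonneg_right hle (le_of_lt hden)
            _ = g0 α := hroot
        · have hge : 0 ≤ g1 α := by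
            by_contra hc
            push_neg at hc
            exact hαT (Finset.mem_filter.2 ⟨(hfin j).mem_toFinset.2 hα, hc⟩)
          have h6 : θ * g0 α ≤ g0 α := by nlinarith
          have h7 : 0 ≤ θ * g1 α := mul_nonneg hθ0 hge
          linarith [h6, h7, mul_sub θ (g0 α) (g1 α)]
      have hAθ : ell xθ ((zR a, sj) : (Fin n → ℝ) × ℝ) = m j xθ := by
        refine le_antisymm (hbound_i j xθ _ hwjmem) ?_
        obtain ⟨αs, hαs, hαseq⟩ := exists_msup (hfin j) (hsuppne j) xθ
        have h1 := hgθ αs hαs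
        have h2 : ell xθ ((zR αs, cf (f j) αs) : (Fin n → ℝ) × ℝ)
            = cf (f j) αs + dotR (zR αs) xθ := rfl
        rw [h2, hαseq] at h1
        exact h1
      have hvθ : ∀ z ∈ Hhat, ell xθ z ≤ ell xθ ((vR, t - sj) : (Fin n → ℝ) × ℝ) := by
        intro z hz
        rw [hxθ, ell_interp, ell_interp]
        exact interp_le2 (hMhat_xv z hz) (hMhat_x' z hz) hθ0 (le_of_lt hθ1)
      set Mθ : ℝ := m j xθ + ell xθ ((vR, t - sj) : (Fin n → ℝ) × ℝ) with hMθ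
      have hHθ : ∀ z ∈ HypSum f, ell xθ z ≤ Mθ := by
        intro z hz
        rw [hHsplit] at hz
        obtain ⟨z1, hz1, z2, hz2, rfl⟩ := hz
        rw [ell_add]
        exact add_le_add (hbound_i j xθ z1 hz1) (hvθ z2 hz2)
      have hzθ : ell xθ ((zR p - δ, t) : (Fin n → ℝ) × ℝ) = Mθ := by
        rw [hzdec, ell_add, hAθ]
      have hzβH : ((zR β, cf (f j) β) : (Fin n → ℝ) × ℝ)
          + ((vR, t - sj) : (Fin n → ℝ) × ℝ) ∈ HypSum f := by
        rw [hHsplit]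
        exact ⟨_, graph_mem_hypoF hβsupp, _, hshatgreat.1, rfl⟩
      have hzβθ : ell xθ (((zR β, cf (f j) β) : (Fin n → ℝ) × ℝ)
          + ((vR, t - sj) : (Fin n → ℝ) × ℝ)) = Mθ := by
        rw [ell_add]
        have hroot : rq β * (g0 β - g1 β) = g0 β := by
          rw [hrq]
          field_simp [ne_of_gt hβden]
        have hβ0 : ell xθ ((zR β, cf (f j) β) : (Fin n → ℝ) × ℝ)
            = ell xθ ((zR a, sj) : (Fin n → ℝ) × ℝ) := by
          rw [hxθ, ell_interp, ell_interp]
          refine interp_eq (he0 β) (he1 β) ?_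
          rw [hθβ]
          exact hroot
        rw [hβ0, hAθ, hMθ]
      have htrans := transfer_level hFpH hFprel hFpfacet.2 (hbound_H x) hMx hHθ hzθ
        hdownz hzβH hzβθ
      have hfinal : ell x (((zR β, cf (f j) β) : (Fin n → ℝ) × ℝ)
          + ((vR, t - sj) : (Fin n → ℝ) × ℝ)) = M x := htrans
      rw [ell_add, hvx] at hfinal
      have hβmx : cf (f j) β + dotR (zR β) x = m j x := by
        have h2 : ell x ((zR β, cf (f j) β) : (Fin n → ℝ) × ℝ)
            = cf (f j) β + dotR (zR β) x := rfl
        rw [h2] at hfinal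
        linarith
      have hg0β : g0 β = 0 := by
        have hb : g0 β = (sj + dotR (zR a) x) - (cf (f j) β + dotR (zR β) x) := by
          rw [hg0def]
        rw [hb, hβmx]
        linarith [hsj_dot]
      obtain ⟨hβa, hβcf⟩ := hg0strict β hβsupp hg0β
      have hg1β : g1 β = 0 := by
        have hb : g1 β = (sj + dotR (zR a) x') - (cf (f j) β + dotR (zR β) x') := by
          rw [hg1def]
        rw [hb, hβa, hβcf]
        ring
      have := hTneg β hβT
      linarith
    · -- Case `T = ∅`: `z` is also an `ℓ_{x'}`-maximizer.
      push_neg at hT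
      have hA1 : m j x' ≤ sj + dotR (zR a) x' := by
        obtain ⟨αs, hαs, hαseq⟩ := exists_msup (hfin j) (hsuppne j) x'
        have h1 := hT αs hαs
        rw [hg1def] at h1
        have h1' : 0 ≤ sj + dotR (zR a) x' - (cf (f j) αs + dotR (zR αs) x') := h1
        have hαseq' : cf (f j) αs + dotR (zR αs) x' = m j x' := hαseq
        linarith
      have hzx' : ell x' ((zR p - δ, t) : (Fin n → ℝ) × ℝ) = M x' := by
        refine le_antisymm (hbound_H x' _ hzH) ?_
        rw [hzdec, ell_add]
        have h1 : ell x' ((zR a, sj) : (Fin n → ℝ) × ℝ) = sj + dotR (zR a) x' := rfl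
        rw [h1]
        linarith [hvmax', hMsplit']
      have htrans := transfer_level hFpH hFprel hFpfacet.2 (hbound_H x) hMx
        (hbound_H x') hzx' hdownz hz'H hMx'
      rw [hz'dec, ell_add, hvx] at htrans
      have h2 : ell x ((zR a', r') : (Fin n → ℝ) × ℝ) = r' + dotR (zR a') x := rfl
      rw [h2] at htrans
      linarith

  · intro hpp
    have ha : a' = a := by
      funext i0
      have h1 := congrFun hpa i0
      rw [hpp] at h1
      have h2 : p i0 = p i0 - a i0 + a' i0 := h1
      omega
    rw [hpp, ha, hvalp, hvalHj_a, hvalHhat, ← EReal.coe_add]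
    norm_num

end TropicalNSS
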